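/- Let R > 0, a,b > 0, and γ = 4^R − 1. If nonnegative reals P₁₁, P₂₂, P₂₃ satisfy P₁₁ ≥ γ(1 + b²(P₂₂+P₂₃)), P₂₂ ≥ γ(a⁻² + P₁₁ + P₂₃), and P₂₃ ≥ γ(1 + b²P₁₁), then necessarily b² ≤ 1/(γ(1+γ)). -/
import Mathlib


theorem stmt_4 (R a b : ℝ) (hR : 0 < R) (ha : 0 < a) (hb : 0 < b)
    (P11 P22 P23 : ℝ) (h11 : 0 ≤ P11) (h22 : 0 ≤ P22) (h23 : 0 ≤ P23)
    (hc1 : P11 ≥ ((4:ℝ) ^ R - 1) * (1 + b ^ 2 * (P22 + P23)))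
    (hc2 : P22 ≥ ((4:ℝ) ^ R - 1) * (a⁻¹ ^ 2 + P11 + P23))
    (hc3 : P23 ≥ ((4:ℝ) ^ R - 1) * (1 + b ^ 2 * P11)) :
    b ^ 2 ≤ 1 / (((4:ℝ) ^ R - 1) * (1 + ((4:ℝ) ^ R - 1))) := by
  set γ : ℝ := (4:ℝ) ^ R - 1 with hγdef
  have hγ : 0 < γ := by
    have : (1:ℝ) < (4:ℝ) ^ R := Real.one_lt_rpow_iff_of_pos (by norm_num) |>.mpr (Or.inl ⟨by norm_num, hR⟩)
    simp [hγdef]; linarith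
  have ha2 : 0 ≤ a⁻¹ ^ 2 := by positivity
  have hb2 : 0 < b ^ 2 := by positivity
  -- P22 ≥ γ (P11 + P23)
  have h22' : P22 ≥ γ * (P11 + P23) := by nlinarith
  have hS : P11 + P23 ≥ 2 * γ + γ * (1 + γ) * b ^ 2 * (P11 + P23) := by
    nlinarith [mul_le_mul_of_nonneg_left h22' (by positivity : (0:ℝ) ≤ γ * b ^ 2)]
  have hpos : 0 < γ * (1 + γ) := by nlinarith
  rw [le_div_iff₀ hpos]
  nlinarith [mul_pos hγ hb2]
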